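/- arXiv:2311.03147 — 2 statements merged into one kernel-verified Lean document; each statement's English description precedes it below -/
import Mathlib

section
/- For every even integer ℘ ≥ 4, the Toeplitz graph T_℘⟨{1, ℘−2}⟩ satisfies ℘/(℘−1) ≤ ldim_f(T_℘⟨{1, ℘−2}⟩) ≤ ℘/(℘−2). -/
/-
In `T_p⟨{1, p-2}⟩` the vertices `0, …, p-2` form a cycle of length `p - 1`, odd since `p` is even,
and `p - 1` is a non-adjacent twin of `0`. On an odd cycle the two ends of an edge are equidistant
from exactly one vertex, its antipode; together with the twin, every edge is resolved by all but
at most two vertices, so the constant weight `1 / (p - 2)` is a local resolving function.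
Conversely, every vertex is equidistant from the ends of one of the `p - 1` edges `{a, a + 1}`, so it
lies in at most `p - 2` of their resolving neighbourhoods; summing their constraints gives
`p - 1 ≤ (p - 2) ∑ ζ`, and `(p - 1) / (p - 2) ≥ p / (p - 1)`.
-/

open Finset

/-- A local resolving function of a graph `G`: a map `ζ : V → [0,1]` such that for every
pair of adjacent vertices `u v`, the sum of `ζ` over the local resolving neighborhood
`R{u,v} = {w : d(w,u) ≠ d(w,v)}` is at least `1`. -/
def IsLocalResolvingFunction {V : Type*} [Fintype V] (G : SimpleGraph V) (ζ : V → ℝ) : Prop :=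
  (∀ w, ζ w ∈ Set.Icc (0 : ℝ) 1) ∧
    ∀ u v, G.Adj u v →
      1 ≤ ∑ w ∈ Finset.univ.filter (fun w => G.dist w u ≠ G.dist w v), ζ w

/-- The local fractional metric dimension of `G`: the minimum of `∑ v, ζ v` over all
local resolving functions `ζ` of `G`. -/
noncomputable def ldimf {V : Type*} [Fintype V] (G : SimpleGraph V) : ℝ :=
  sInf {s : ℝ | ∃ ζ : V → ℝ, IsLocalResolvingFunction G ζ ∧ s = ∑ v, ζ v}

/-- The Toeplitz graph `T_n⟨S⟩` (vertices `0, …, n-1` standing for `1, …, n`):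
two distinct vertices are adjacent iff their absolute difference lies in `S`. -/
def toeplitzGraph (n : ℕ) (S : Set ℕ) : SimpleGraph (Fin n) where
  Adj p q := p ≠ q ∧ Nat.dist (p : ℕ) (q : ℕ) ∈ S
  symm := ⟨fun p q ⟨h1, h2⟩ => ⟨h1.symm, by rwa [Nat.dist_comm]⟩⟩
  loopless := ⟨fun p ⟨h, _⟩ => h rfl⟩

namespace SimpleGraph

variable {V : Type*} {G : SimpleGraph V}

theorem dist_eq_of_lipschitz_of_descent (D : V → V → ℕ) (hD : ∀ v, D v v = 0)
    (hlip : ∀ i k j, G.Adj i k → D i j ≤ D k j + 1)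
    (hdesc : ∀ i j, i ≠ j → ∃ k, G.Adj i k ∧ D k j + 1 = D i j) (i j : V) :
    G.dist i j = D i j := by
  have hwalk : ∀ n i j, D i j = n → ∃ w : G.Walk i j, w.length = n := by
    intro n
    induction n with
    | zero =>
      intro i j h
      obtain rfl : i = j := by
        by_contra hij
        obtain ⟨k, -, hk⟩ := hdesc i j hij
        omega
      exact ⟨.nil, rfl⟩
    | succ n ih =>
      intro i j h
      obtain ⟨k, hik, hk⟩ := hdesc i j (by rintro rfl; simp [hD] at h)
      obtain ⟨w, hw⟩ := ih k j (by omega)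
      exact ⟨.cons hik w, by simp [hw]⟩
  have hle : ∀ {i j} (w : G.Walk i j), D i j ≤ w.length := by
    intro i j w
    induction w with
    | nil => simp [hD]
    | @cons a b c hadj w ih => have := hlip a b c hadj; simp only [Walk.length_cons]; omega
  obtain ⟨w, hw⟩ := hwalk _ i j rfl
  obtain ⟨w', hw'⟩ := Reachable.exists_walk_length_eq_dist ⟨w⟩
  exact le_antisymm (hw ▸ dist_le w) (hw' ▸ hle w')

end SimpleGraph

section LocalResolving

variable {V : Type*} [Fintype V] (G : SimpleGraph V)

noncomputable def resolvingNbhd (u v : V) : Finset V := univ.filter fun w => G.dist w u ≠ G.dist w v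

variable {G}

theorem mem_resolvingNbhd_self {u v : V} (h : G.Adj u v) : u ∈ resolvingNbhd G u v := by
  simp [resolvingNbhd, SimpleGraph.dist_eq_one_iff_adj.2 h]

theorem isLocalResolvingFunction_one : IsLocalResolvingFunction G 1 := by
  refine ⟨fun _ => ⟨zero_le_one, le_rfl⟩, fun u v h => ?_⟩
  exact Finset.single_le_sum (f := (1 : V → ℝ)) (fun _ _ => zero_le_one) (mem_resolvingNbhd_self h)

theorem ldimf_le {ζ : V → ℝ} (h : IsLocalResolvingFunction G ζ) : ldimf G ≤ ∑ v, ζ v :=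
  csInf_le ⟨0, by rintro _ ⟨ζ, hζ, rfl⟩; exact sum_nonneg fun w _ => (hζ.1 w).1⟩ ⟨ζ, h, rfl⟩

theorem le_ldimf {b : ℝ} (h : ∀ ζ, IsLocalResolvingFunction G ζ → b ≤ ∑ v, ζ v) : b ≤ ldimf G :=
  le_csInf ⟨_, 1, isLocalResolvingFunction_one, rfl⟩ (by rintro _ ⟨ζ, hζ, rfl⟩; exact h ζ hζ)

theorem ldimf_le_div_of_le_card_resolvingNbhd {c : ℕ} (hc : 0 < c)
    (h : ∀ u v, G.Adj u v → c ≤ #(resolvingNbhd G u v)) :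
    ldimf G ≤ Fintype.card V / c := by
  have hc' : (0 : ℝ) < c := by exact_mod_cast hc
  convert ldimf_le (ζ := fun _ => (c : ℝ)⁻¹) ⟨fun _ => ⟨by positivity, ?_⟩, fun u v huv => ?_⟩
  · simp [div_eq_mul_inv]
  · exact inv_le_one_of_one_le₀ (by exact_mod_cast hc)
  · rw [sum_const, nsmul_eq_mul, ← div_eq_mul_inv, le_div_iff₀ hc', one_mul]
    exact_mod_cast h u v huv

theorem div_le_ldimf_of_card_filter_mem_resolvingNbhd_le [DecidableEq V] {ι : Type*} [Fintype ι]
    (u v : ι → V) (hadj : ∀ i, G.Adj (u i) (v i)) {m : ℕ}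
    (hm : ∀ w, #{i | w ∈ resolvingNbhd G (u i) (v i)} ≤ m) :
    Fintype.card ι / m ≤ ldimf G := by
  refine le_ldimf fun ζ hζ => div_le_of_le_mul₀ (Nat.cast_nonneg _)
    (sum_nonneg fun w _ => (hζ.1 w).1) ?_
  calc (Fintype.card ι : ℝ) = ∑ _i : ι, 1 := by simp
    _ ≤ ∑ i, ∑ w ∈ resolvingNbhd G (u i) (v i), ζ w := sum_le_sum fun i _ => hζ.2 _ _ (hadj i)
    _ = ∑ i, ∑ w, if w ∈ resolvingNbhd G (u i) (v i) then ζ w else 0 := by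
      simp only [sum_ite_mem, univ_inter]
    _ = ∑ w, ∑ i, if w ∈ resolvingNbhd G (u i) (v i) then ζ w else 0 := sum_comm
    _ = ∑ w, #{i | w ∈ resolvingNbhd G (u i) (v i)} * ζ w := by
      simp only [← sum_filter, sum_const, nsmul_eq_mul]
    _ ≤ ∑ w, m * ζ w := sum_le_sum fun w _ =>
      mul_le_mul_of_nonneg_right (by exact_mod_cast hm w) (hζ.1 w).1
    _ = _ := by rw [← mul_sum, mul_comm]

end LocalResolving

/-- Distances in `T_p⟨{1, p-2}⟩`: those of the cycle `C_{p-1}` on `0, …, p-2`, with `p - 1` placed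
at position `p - 1 ≡ 0`, except that the twins `0` and `p - 1` are at distance `2`. -/
def toeplitzDist (p i j : ℕ) : ℕ :=
  if Nat.dist i j = p - 1 then 2 else min (Nat.dist i j) (p - 1 - Nat.dist i j)

theorem toeplitzDist_self {p : ℕ} (hp : 1 < p) (i : ℕ) : toeplitzDist p i i = 0 := by
  unfold toeplitzDist Nat.dist
  split_ifs <;> omega

theorem toeplitzDist_le_toeplitzDist_add_one {p i j k : ℕ} (hp : 4 ≤ p) (hi : i < p) (hj : j < p)
    (hk : k < p) (hik : Nat.dist i k = 1 ∨ Nat.dist i k = p - 2) :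
    toeplitzDist p i j ≤ toeplitzDist p k j + 1 := by
  unfold toeplitzDist Nat.dist at *
  split_ifs <;> omega

theorem exists_toeplitzDist_descent_of_eq_last {p j : ℕ} (hp : 4 ≤ p) (hj : j < p - 1) :
    ∃ k < p, (Nat.dist (p - 1) k = 1 ∨ Nat.dist (p - 1) k = p - 2) ∧
      toeplitzDist p k j + 1 = toeplitzDist p (p - 1) j := by
  refine if h : 2 * j ≤ p - 1 then ⟨1, ?_⟩ else ⟨p - 2, ?_⟩ <;>
    unfold toeplitzDist Nat.dist <;> split_ifs <;> omega

theorem exists_toeplitzDist_descent_to_last {p i : ℕ} (hp : 4 ≤ p) (hi : i < p - 1) :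
    ∃ k < p, (Nat.dist i k = 1 ∨ Nat.dist i k = p - 2) ∧
      toeplitzDist p k (p - 1) + 1 = toeplitzDist p i (p - 1) := by
  refine if h0 : i = 0 then ⟨1, ?_⟩ else if h1 : i = 1 ∨ i = p - 2 then ⟨p - 1, ?_⟩
    else if h : 2 * i ≤ p - 1 then ⟨i - 1, ?_⟩ else ⟨i + 1, ?_⟩ <;>
    unfold toeplitzDist Nat.dist <;> split_ifs <;> omega

theorem exists_toeplitzDist_descent_of_lt {p i j : ℕ} (hp : 4 ≤ p) (hi : i < p - 1) (hj : j < p - 1)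
    (hij : i ≠ j) :
    ∃ k < p, (Nat.dist i k = 1 ∨ Nat.dist i k = p - 2) ∧
      toeplitzDist p k j + 1 = toeplitzDist p i j := by
  -- step around the cycle `0 → 1 → ⋯ → p-2 → 0` along the shorter arc to `j`
  refine if hup : (i < j ∧ 2 * (j - i) ≤ p - 1) ∨ (j < i ∧ p - 1 < 2 * (i - j)) then
      if hl : i = p - 2 then ⟨0, ?_⟩ else ⟨i + 1, ?_⟩
    else if h0 : i = 0 then ⟨p - 2, ?_⟩ else ⟨i - 1, ?_⟩ <;>
    unfold toeplitzDist Nat.dist <;> split_ifs <;> omega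

theorem exists_toeplitzDist_descent {p i j : ℕ} (hp : 4 ≤ p) (hi : i < p) (hj : j < p)
    (hij : i ≠ j) :
    ∃ k < p, (Nat.dist i k = 1 ∨ Nat.dist i k = p - 2) ∧
      toeplitzDist p k j + 1 = toeplitzDist p i j := by
  rcases (show i = p - 1 ∨ j = p - 1 ∨ (i < p - 1 ∧ j < p - 1) by omega) with rfl | rfl | ⟨hi, hj⟩
  · exact exists_toeplitzDist_descent_of_eq_last hp (by omega)
  · exact exists_toeplitzDist_descent_to_last hp (by omega)
  · exact exists_toeplitzDist_descent_of_lt hp hi hj hij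

theorem toeplitzGraph_adj_iff {p : ℕ} (hp : 2 < p) {i k : Fin p} :
    (toeplitzGraph p {1, p - 2}).Adj i k ↔ Nat.dist i k = 1 ∨ Nat.dist i k = p - 2 := by
  refine ⟨And.right, fun h => ⟨?_, h⟩⟩
  rintro rfl
  simp only [Nat.dist_self] at h
  omega

theorem toeplitzGraph_dist {p : ℕ} (hp : 4 ≤ p) (i j : Fin p) :
    (toeplitzGraph p {1, p - 2}).dist i j = toeplitzDist p i j := by
  refine SimpleGraph.dist_eq_of_lipschitz_of_descent (fun i j : Fin p => toeplitzDist p i j)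
    (fun i => toeplitzDist_self (by omega) i) (fun i k j h => ?_) (fun i j hij => ?_) i j
  · exact toeplitzDist_le_toeplitzDist_add_one hp i.2 j.2 k.2
      ((toeplitzGraph_adj_iff (by omega)).1 h)
  · obtain ⟨k, hk, hik, hkj⟩ := exists_toeplitzDist_descent hp i.2 j.2 (Fin.val_ne_of_ne hij)
    exact ⟨⟨k, hk⟩, (toeplitzGraph_adj_iff (by omega)).2 hik, hkj⟩

theorem exists_eq_or_eq_of_toeplitzDist_eq {m u v : ℕ} (hu : u < 2 * m + 2) (hv : v < 2 * m + 2)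
    (huv : Nat.dist u v = 1 ∨ Nat.dist u v = 2 * m) :
    ∃ x y, ∀ w < 2 * m + 2, toeplitzDist (2 * m + 2) w u = toeplitzDist (2 * m + 2) w v →
      w = x ∨ w = y := by
  -- the antipodes on `C_{2m+1}`: `a + m + 1` and `a - m` for `{a, a + 1}` (both vertices only when
  -- they are the twins `0` and `2m+1`), `m` and `m + 1` for the chords `{0, 2m}` and `{1, 2m+1}`
  refine if h1 : Nat.dist u v = 1 then ⟨min u v + m + 1, min u v - m, fun w hw h => ?_⟩
    else ⟨m, m + 1, fun w hw h => ?_⟩ <;>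
    unfold toeplitzDist Nat.dist at * <;> split_ifs at h <;> omega

theorem exists_toeplitzDist_eq_add_one {m w : ℕ} (hm : 0 < m) (hw : w < 2 * m + 2) :
    ∃ a < 2 * m + 1, toeplitzDist (2 * m + 2) w a = toeplitzDist (2 * m + 2) w (a + 1) := by
  refine if h : m + 1 ≤ w then ⟨w - (m + 1), ?_⟩ else ⟨w + m, ?_⟩ <;>
    unfold toeplitzDist Nat.dist <;> split_ifs <;> omega

theorem le_card_resolvingNbhd_toeplitzGraph {m : ℕ} (hm : 0 < m) {u v : Fin (2 * m + 2)}
    (huv : (toeplitzGraph (2 * m + 2) {1, 2 * m + 2 - 2}).Adj u v) :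
    2 * m ≤ #(resolvingNbhd (toeplitzGraph (2 * m + 2) {1, 2 * m + 2 - 2}) u v) := by
  have hp : 4 ≤ 2 * m + 2 := by omega
  obtain ⟨x, y, hxy⟩ := exists_eq_or_eq_of_toeplitzDist_eq u.2 v.2
    (by have := (toeplitzGraph_adj_iff (by omega)).1 huv; omega)
  have hcompl :
      #{w : Fin (2 * m + 2) | toeplitzDist (2 * m + 2) w u = toeplitzDist (2 * m + 2) w v} ≤ 2 :=
    (card_le_card_of_injOn Fin.val (t := {x, y})
      (fun w hw => by simpa using hxy w w.2 (by simpa using hw))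
      Fin.val_injective.injOn).trans card_le_two
  have := card_filter_add_card_filter_not (s := univ)
    fun w : Fin (2 * m + 2) => toeplitzDist (2 * m + 2) w u ≠ toeplitzDist (2 * m + 2) w v
  rw [card_univ, Fintype.card_fin] at this
  simp only [resolvingNbhd, toeplitzGraph_dist hp, not_not] at this ⊢
  omega

theorem card_filter_mem_resolvingNbhd_toeplitzGraph_le {m : ℕ} (hm : 0 < m) (w : Fin (2 * m + 2)) :
    #{a : Fin (2 * m + 1) | w ∈ resolvingNbhd (toeplitzGraph (2 * m + 2) {1, 2 * m + 2 - 2})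
      a.castSucc a.succ} ≤ 2 * m := by
  obtain ⟨a, ha, hwa⟩ := exists_toeplitzDist_eq_add_one hm w.2
  calc _ ≤ #(univ.erase (⟨a, ha⟩ : Fin (2 * m + 1))) := by
        refine card_le_card fun b hb => mem_erase.2 ⟨?_, mem_univ b⟩
        rintro rfl
        simp only [resolvingNbhd, toeplitzGraph_dist (by omega : 4 ≤ 2 * m + 2), mem_filter,
          mem_univ, true_and] at hb
        exact hb hwa
    _ = 2 * m := by simp

/-- For every even integer `℘ ≥ 4`,
`℘/(℘-1) ≤ ldimf(T_℘⟨{1, ℘-2}⟩) ≤ ℘/(℘-2)`. -/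
theorem ldimf_toeplitz_one_sub_two_even (p : ℕ) (hp : 4 ≤ p) (heven : Even p) :
    (p : ℝ) / ((p : ℝ) - 1) ≤ ldimf (toeplitzGraph p {1, p - 2}) ∧
      ldimf (toeplitzGraph p {1, p - 2}) ≤ (p : ℝ) / ((p : ℝ) - 2) := by
  obtain ⟨m, rfl⟩ : ∃ m, p = 2 * m + 2 := ⟨p / 2 - 1, by obtain ⟨c, hc⟩ := heven; omega⟩
  have hm : 0 < m := by omega
  have hm' : (0 : ℝ) < m := by exact_mod_cast hm
  constructor
  · calc ((2 * m + 2 : ℕ) : ℝ) / ((2 * m + 2 : ℕ) - 1) ≤ ((2 * m + 1 : ℕ) : ℝ) / (2 * m : ℕ) := by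
          rw [div_le_div_iff₀ (by push_cast; linarith) (by positivity)]
          push_cast; nlinarith
      _ = Fintype.card (Fin (2 * m + 1)) / (2 * m : ℕ) := by rw [Fintype.card_fin]
      _ ≤ _ := div_le_ldimf_of_card_filter_mem_resolvingNbhd_le _ _
          (fun a => (toeplitzGraph_adj_iff (by omega)).2 (Or.inl (by simp [Nat.dist])))
          (card_filter_mem_resolvingNbhd_toeplitzGraph_le hm)
  · convert ldimf_le_div_of_le_card_resolvingNbhd (c := 2 * m) (by omega)
      fun u v => le_card_resolvingNbhd_toeplitzGraph hm using 2
    · simp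
    · push_cast; ring
end

section
/- For every integer ℘ ≥ 6 with ℘ ≡ 2 (mod 4), the Toeplitz graph T_℘⟨{1, 2, ℘−1}⟩ satisfies 1 ≤ ldim_f(T_℘⟨{1, 2, ℘−1}⟩) ≤ 2. -/
/-!
Write `p = 4k + 2`. From either middle vertex `x ∈ {2k, 2k + 1}` the distance to `j` is
`⌈|x - j| / 2⌉`, as in the path with steps `1` and `2`. Across every edge one of these two rounded
distances changes, so the middle pair resolves every edge and its indicator is a local resolving
function of weight `2`; every local resolving function has weight at least `1`, already on the
edge `{0, 1}`.
-/

open Finset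

def IsLocalResolvingSet {V : Type*} (G : SimpleGraph V) (W : Finset V) : Prop :=
  ∀ u v, G.Adj u v → ∃ w ∈ W, G.dist w u ≠ G.dist w v

section LocalResolvingFunction

variable {V : Type*} [Fintype V] {G : SimpleGraph V} {ζ : V → ℝ}

theorem IsLocalResolvingFunction.one_le_sum (hζ : IsLocalResolvingFunction G ζ) {u v : V}
    (huv : G.Adj u v) : 1 ≤ ∑ w, ζ w :=
  (hζ.2 u v huv).trans <|
    sum_le_sum_of_subset_of_nonneg (filter_subset _ _) fun w _ _ => (hζ.1 w).1

theorem ldimf_le_sum (hζ : IsLocalResolvingFunction G ζ) : ldimf G ≤ ∑ w, ζ w :=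
  csInf_le ⟨0, by rintro _ ⟨ζ', hζ', rfl⟩; exact sum_nonneg fun w _ => (hζ'.1 w).1⟩ ⟨ζ, hζ, rfl⟩

theorem one_le_ldimf (hζ : IsLocalResolvingFunction G ζ) {u v : V} (huv : G.Adj u v) :
    1 ≤ ldimf G :=
  le_csInf ⟨_, ζ, hζ, rfl⟩ <| by rintro _ ⟨ζ', hζ', rfl⟩; exact hζ'.one_le_sum huv

theorem IsLocalResolvingSet.isLocalResolvingFunction_indicator [DecidableEq V]
    {W : Finset V} (hW : IsLocalResolvingSet G W) :
    IsLocalResolvingFunction G fun w => if w ∈ W then 1 else 0 := by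
  refine ⟨fun w => by dsimp only; split_ifs <;> simp, fun u v huv => ?_⟩
  obtain ⟨w, hwW, hw⟩ := hW u v huv
  calc (1 : ℝ) = if w ∈ W then 1 else 0 := by simp [hwW]
    _ ≤ _ := single_le_sum (f := fun x => if x ∈ W then (1 : ℝ) else 0)
      (fun x _ => by positivity) (mem_filter.2 ⟨mem_univ w, hw⟩)

end LocalResolvingFunction

theorem SimpleGraph.Walk.dist_le_length {V : Type*} {G : SimpleGraph V} (φ : V → ℕ)
    (hφ : ∀ u v, G.Adj u v → Nat.dist (φ u) (φ v) ≤ 1) {i j : V} (W : G.Walk i j) :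
    Nat.dist (φ i) (φ j) ≤ W.length := by
  induction W with
  | nil => simp
  | @cons a b c hab W ih =>
    have := hφ a b hab
    have := Nat.dist.triangle_inequality (φ a) (φ b) (φ c)
    simp only [length_cons]
    omega

theorem SimpleGraph.Reachable.natDist_le_dist {V : Type*} {G : SimpleGraph V} (φ : V → ℕ)
    (hφ : ∀ u v, G.Adj u v → Nat.dist (φ u) (φ v) ≤ 1) {i j : V} (hij : G.Reachable i j) :
    Nat.dist (φ i) (φ j) ≤ G.dist i j := by
  obtain ⟨W, hW⟩ := hij.exists_walk_length_eq_dist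
  exact hW ▸ W.dist_le_length φ hφ

section Toeplitz

variable {n : ℕ} {S : Set ℕ}

theorem toeplitzGraph_adj_add {s : ℕ} (hs : s ∈ S) (hs0 : 0 < s) (i j : Fin n)
    (hij : (j : ℕ) = i + s) : (toeplitzGraph n S).Adj i j := by
  refine ⟨fun h => by rw [h] at hij; omega, ?_⟩
  rwa [Nat.dist_comm, hij, Nat.dist_eq_sub_of_le_right (by omega), Nat.add_sub_cancel_left]

theorem toeplitzGraph_exists_walk_of_le (h1 : 1 ∈ S) (h2 : 2 ∈ S) (i : Fin n) :
    ∀ (d : ℕ) (j : Fin n), (j : ℕ) = i + d →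
      ∃ W : (toeplitzGraph n S).Walk i j, W.length ≤ (d + 1) / 2
  | 0, j, hj => ⟨.copy .nil rfl (Fin.ext hj.symm), by simp⟩
  | 1, j, hj => ⟨.cons (toeplitzGraph_adj_add h1 one_pos _ _ hj) .nil, by simp⟩
  | d + 2, j, hj => by
    obtain ⟨W, hW⟩ := toeplitzGraph_exists_walk_of_le h1 h2 i d ⟨i + d, by omega⟩ rfl
    exact ⟨W.concat (toeplitzGraph_adj_add h2 two_pos _ _ (by simp only; omega)),
      by simp only [SimpleGraph.Walk.length_concat]; omega⟩

theorem toeplitzGraph_reachable (h1 : 1 ∈ S) (h2 : 2 ∈ S) (i j : Fin n) :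
    (toeplitzGraph n S).Reachable i j := by
  wlog hij : (i : ℕ) ≤ j generalizing i j
  · exact (this j i (by omega)).symm
  exact ⟨(toeplitzGraph_exists_walk_of_le h1 h2 i (j - i) j (by omega)).choose⟩

theorem toeplitzGraph_dist_le (h1 : 1 ∈ S) (h2 : 2 ∈ S) (i j : Fin n) :
    (toeplitzGraph n S).dist i j ≤ (Nat.dist i j + 1) / 2 := by
  wlog hij : (i : ℕ) ≤ j generalizing i j
  · rw [SimpleGraph.dist_comm, Nat.dist_comm]
    exact this j i (by omega)
  obtain ⟨W, hW⟩ := toeplitzGraph_exists_walk_of_le h1 h2 i (j - i) j (by omega)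
  rw [Nat.dist_eq_sub_of_le hij]
  exact (SimpleGraph.dist_le W).trans hW

/-- Seen from a middle vertex `x`, the wrap-around edge `{0, p - 1}` joins vertices at distances
differing by one, so it is no shortcut and the distance is that of the path `T_p⟨{1, 2}⟩`. -/
theorem toeplitzGraph_dist_middle {p k : ℕ} (hp : p = 4 * k + 2) {x : Fin p}
    (hx : (x : ℕ) = 2 * k ∨ (x : ℕ) = 2 * k + 1) (j : Fin p) :
    (toeplitzGraph p {1, 2, p - 1}).dist x j = (Nat.dist x j + 1) / 2 := by
  have h1 : 1 ∈ ({1, 2, p - 1} : Set ℕ) := by simp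
  have h2 : 2 ∈ ({1, 2, p - 1} : Set ℕ) := by simp
  set φ : Fin p → ℕ := fun w => (Nat.dist x w + 1) / 2
  have hφ : ∀ u v, (toeplitzGraph p {1, 2, p - 1}).Adj u v → Nat.dist (φ u) (φ v) ≤ 1 := by
    rintro u v ⟨-, huv⟩
    have := u.isLt
    have := v.isLt
    simp only [φ, Set.mem_insert_iff, Set.mem_singleton_iff] at huv ⊢
    unfold Nat.dist at *
    omega
  have hge := (toeplitzGraph_reachable h1 h2 x j).natDist_le_dist φ hφ
  exact le_antisymm (toeplitzGraph_dist_le h1 h2 x j) (by simpa [φ, Nat.dist_zero_left] using hge)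

theorem toeplitzGraph_isLocalResolvingSet_middle {p k : ℕ} (hp : p = 4 * k + 2) :
    IsLocalResolvingSet (toeplitzGraph p {1, 2, p - 1})
      {⟨2 * k, by omega⟩, ⟨2 * k + 1, by omega⟩} := by
  rintro u v ⟨-, huv⟩
  have hA := toeplitzGraph_dist_middle hp (x := ⟨2 * k, by omega⟩) (Or.inl rfl)
  have hB := toeplitzGraph_dist_middle hp (x := ⟨2 * k + 1, by omega⟩) (Or.inr rfl)
  simp only [mem_insert, mem_singleton, exists_eq_or_imp, exists_eq_left, hA, hB]
  have := u.isLt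
  have := v.isLt
  simp only [Set.mem_insert_iff, Set.mem_singleton_iff] at huv
  unfold Nat.dist at *
  omega

end Toeplitz

theorem ldimf_toeplitz_mod_four_two_general (p : ℕ) (hmod : p % 4 = 2) :
    1 ≤ ldimf (toeplitzGraph p {1, 2, p - 1}) ∧
      ldimf (toeplitzGraph p {1, 2, p - 1}) ≤ 2 := by
  obtain ⟨k, hk⟩ : ∃ k, p = 4 * k + 2 := ⟨p / 4, by omega⟩
  have hζ := (toeplitzGraph_isLocalResolvingSet_middle hk).isLocalResolvingFunction_indicator
  have hedge : (toeplitzGraph p {1, 2, p - 1}).Adj ⟨0, by omega⟩ ⟨1, by omega⟩ :=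
    toeplitzGraph_adj_add (by simp) one_pos _ _ rfl
  refine ⟨one_le_ldimf hζ hedge, (ldimf_le_sum hζ).trans ?_⟩
  rw [sum_boole, filter_mem_eq_inter, univ_inter]
  exact_mod_cast card_le_two

/-- For every integer `℘ ≥ 6` with `℘ ≡ 2 (mod 4)`,
`1 ≤ ldimf(T_℘⟨{1, 2, ℘-1}⟩) ≤ 2`. -/
theorem ldimf_toeplitz_mod_four_two (p : ℕ) (hp : 6 ≤ p) (hmod : p % 4 = 2) :
    1 ≤ ldimf (toeplitzGraph p {1, 2, p - 1}) ∧
      ldimf (toeplitzGraph p {1, 2, p - 1}) ≤ 2 :=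
  ldimf_toeplitz_mod_four_two_general p hmod
end
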